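/- arXiv:2302.01904 — 3 statements merged into one kernel-verified Lean document; each statement's English description precedes it below -/
import Mathlib

section
/- For every positive integer k, the number ⌊2k·√2⌋ has exactly one predecessor under f, namely 4k; that is, {n ≥ 1 : f(n) = ⌊2k·√2⌋} = {4k}. -/
/-- The map `f(n) = ⌊n/√2⌋` if `n` is even and `f(n) = ⌊n·√2⌋` if `n` is odd. -/
noncomputable def f (n : ℕ) : ℕ :=
  if Even n then ⌊(n : ℝ) / Real.sqrt 2⌋₊ else ⌊(n : ℝ) * Real.sqrt 2⌋₊

lemma sqrt2_one_le : (1 : ℝ) ≤ Real.sqrt 2 := by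
  rw [show (1:ℝ) = Real.sqrt 1 by simp]
  exact Real.sqrt_le_sqrt (by norm_num)

lemma floor_mul_sqrt2_strictMono : StrictMono (fun a : ℕ => ⌊(a : ℝ) * Real.sqrt 2⌋₊) := by
  intro a b hab
  have hnn : 0 ≤ (a:ℝ) * Real.sqrt 2 := by positivity
  have hcast : (a:ℝ) + 1 ≤ b := by exact_mod_cast hab
  have h1 : (a:ℝ) * Real.sqrt 2 + 1 ≤ (b:ℝ) * Real.sqrt 2 := by
    nlinarith [sqrt2_one_le]
  calc ⌊(a:ℝ)*Real.sqrt 2⌋₊ < ⌊(a:ℝ)*Real.sqrt 2⌋₊ + 1 := Nat.lt_succ_self _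
    _ = ⌊(a:ℝ)*Real.sqrt 2 + 1⌋₊ := (Nat.floor_add_one hnn).symm
    _ ≤ ⌊(b:ℝ)*Real.sqrt 2⌋₊ := Nat.floor_le_floor h1

lemma two_mul_div_sqrt2 (j : ℕ) : ((2 * j : ℕ) : ℝ) / Real.sqrt 2 = (j : ℝ) * Real.sqrt 2 := by
  have h : Real.sqrt 2 ≠ 0 := by positivity
  rw [div_eq_iff h]
  have := Real.sq_sqrt (by norm_num : (0:ℝ) ≤ 2)
  push_cast
  nlinarith

/-- `⌊2k·√2⌋` has exactly one predecessor under `f`, namely `4k`. -/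
theorem pred_of_even_multiple (k : ℕ) (hk : 0 < k) :
    {n : ℕ | 1 ≤ n ∧ f n = ⌊(2 * k : ℝ) * Real.sqrt 2⌋₊} = {4 * k} := by
  ext n
  simp only [Set.mem_setOf_eq, Set.mem_singleton_iff]
  constructor
  · rintro ⟨hn1, hfn⟩
    by_cases he : Even n
    · obtain ⟨j, hj⟩ := he
      have hn2 : n = 2 * j := by omega
      rw [f, if_pos (by exact ⟨j, hj⟩), hn2, two_mul_div_sqrt2] at hfn
      have : j = 2 * k := floor_mul_sqrt2_strictMono.injective (by
        simpa using hfn)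
      omega
    · rw [f, if_neg he] at hfn
      have : n = 2 * k := floor_mul_sqrt2_strictMono.injective (by
        simpa using hfn)
      exact absurd (this ▸ even_two_mul k) he
  · rintro rfl
    refine ⟨by omega, ?_⟩
    rw [f, if_pos (by exact ⟨2*k, by ring⟩)]
    rw [show (4*k) = 2 * (2*k) by ring, two_mul_div_sqrt2]
    push_cast
    ring_nf
end

section
/- For every positive integer N, the number of positive integers m < N that have no predecessor under f equals ⌊N/(2+√2)⌋. In particular, for ℓ = 1, 2, 3, 4, 5, 6 the number of such m below 10^ℓ is 2, 29, 292, 2928, 29289, 292893 respectively. -/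
/-- `m` has no predecessor under `f`. -/
def NoPred (m : ℕ) : Prop := ¬ ∃ n : ℕ, 0 < n ∧ f n = m

/-!
The values of `f` at positive integers are exactly the terms `⌊k√2⌋`, `k ≥ 1`: at `n = 2k` because
`2k/√2 = k√2`, at odd `n` by definition. Since `1/√2 + 1/(2 + √2) = 1`, Rayleigh's theorem on
complementary Beatty sequences says that the positive integers without predecessor are the terms
`⌊k(2 + √2)⌋`, `k ≥ 1`. Such a term is below `N` iff `k(2 + √2) < N`, i.e. (by irrationality)
iff `k ≤ ⌊N/(2 + √2)⌋`, and these terms are distinct. The six values then follow from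
`1.41421356 < √2 < 1.41421357`.
-/

open Real

/-- The set `B⁺_r` of `Mathlib.NumberTheory.Rayleigh`, as a set of natural numbers (for `r ≥ 0`). -/
def natBeattySet (r : ℝ) : Set ℕ := {m | ∃ k : ℕ, 0 < k ∧ ⌊(k : ℝ) * r⌋₊ = m}

section Beatty

variable {r s : ℝ}

theorem natCast_mem_beattySeq_pos_iff (hr : 0 ≤ r) (m : ℕ) :
    (m : ℤ) ∈ {beattySeq r k | k > 0} ↔ m ∈ natBeattySet r := by
  constructor
  · rintro ⟨k, hk, hkm⟩
    lift k to ℕ using hk.le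
    refine ⟨k, by exact_mod_cast hk, ?_⟩
    rw [beattySeq, Int.cast_natCast, ← Int.natCast_floor_eq_floor (by positivity)] at hkm
    exact_mod_cast hkm
  · rintro ⟨k, hk, hkm⟩
    refine ⟨k, by exact_mod_cast hk, ?_⟩
    rw [beattySeq, Int.cast_natCast, ← Int.natCast_floor_eq_floor (by positivity), hkm]

theorem Irrational.mem_natBeattySet_iff_notMem (hrs : r.HolderConjugate s) (hr : Irrational r)
    {m : ℕ} (hm : 0 < m) : m ∈ natBeattySet s ↔ m ∉ natBeattySet r := by
  have hpart := Set.ext_iff.1 (hr.beattySeq_symmDiff_beattySeq_pos hrs) m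
  rw [Set.mem_symmDiff, natCast_mem_beattySeq_pos_iff hrs.nonneg,
    natCast_mem_beattySeq_pos_iff hrs.symm.nonneg] at hpart
  have : (0 : ℤ) < m := by exact_mod_cast hm
  tauto

theorem pos_of_mem_natBeattySet (hr : 1 ≤ r) {m : ℕ} (hm : m ∈ natBeattySet r) : 0 < m := by
  obtain ⟨k, hk, rfl⟩ := hm
  exact Nat.floor_pos.2 (one_le_mul_of_one_le_of_one_le (by exact_mod_cast hk) hr)

theorem strictMono_natFloor_mul (hr : 1 ≤ r) : StrictMono fun k : ℕ ↦ ⌊(k : ℝ) * r⌋₊ := by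
  refine strictMono_nat_of_lt_succ fun k ↦ ?_
  calc ⌊(k : ℝ) * r⌋₊ < ⌊(k : ℝ) * r⌋₊ + 1 := Nat.lt_succ_self _
    _ = ⌊(k : ℝ) * r + 1⌋₊ := (Nat.floor_add_one (by positivity)).symm
    _ ≤ ⌊((k + 1 : ℕ) : ℝ) * r⌋₊ := Nat.floor_le_floor (by push_cast; linarith)

theorem natBeattySet_inter_Iio (hr : 0 < r) (hirr : Irrational r) (N : ℕ) :
    natBeattySet r ∩ Set.Iio N = (fun k : ℕ ↦ ⌊(k : ℝ) * r⌋₊) '' Set.Icc 1 ⌊N / r⌋₊ := by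
  have hbound : ∀ k : ℕ, 0 < k → (⌊(k : ℝ) * r⌋₊ < N ↔ k ≤ ⌊N / r⌋₊) := fun k hk ↦ by
    have hne : (k : ℝ) * r ≠ N := (hirr.natCast_mul hk.ne').ne_nat N
    rw [Nat.floor_lt (by positivity), Nat.le_floor_iff (by positivity), le_div_iff₀ hr,
      lt_iff_le_and_ne, and_iff_left hne]
  ext m
  constructor
  · rintro ⟨⟨k, hk, rfl⟩, hkN⟩
    exact ⟨k, ⟨hk, (hbound k hk).1 hkN⟩, rfl⟩
  · rintro ⟨k, ⟨hk, hkN⟩, rfl⟩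
    exact ⟨⟨k, hk, rfl⟩, (hbound k hk).2 hkN⟩

theorem ncard_natBeattySet_inter_Iio (hr : 1 ≤ r) (hirr : Irrational r) (N : ℕ) :
    (natBeattySet r ∩ Set.Iio N).ncard = ⌊N / r⌋₊ := by
  rw [natBeattySet_inter_Iio (by linarith) hirr,
    (strictMono_natFloor_mul hr).injective.injOn.ncard_image,
    ← Finset.coe_Icc, Set.ncard_coe_finset, Nat.card_Icc, Nat.add_sub_cancel]

end Beatty

theorem f_two_mul (k : ℕ) : f (2 * k) = ⌊(k : ℝ) * √2⌋₊ := by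
  have h : (2 * k : ℕ) / √2 = k * √2 := by
    rw [div_eq_iff (by positivity)]
    push_cast
    rw [mul_assoc, mul_self_sqrt zero_le_two, mul_comm]
  rw [f, if_pos (even_two_mul k), h]

theorem exists_pos_f_eq_iff (m : ℕ) : (∃ n, 0 < n ∧ f n = m) ↔ m ∈ natBeattySet √2 := by
  constructor
  · rintro ⟨n, hn, rfl⟩
    rcases Nat.even_or_odd' n with ⟨k, rfl | rfl⟩
    · exact ⟨k, by omega, (f_two_mul k).symm⟩
    · exact ⟨2 * k + 1, hn, by rw [f, if_neg (Nat.not_even_two_mul_add_one k)]⟩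
  · rintro ⟨k, hk, rfl⟩
    exact ⟨2 * k, by omega, f_two_mul k⟩

theorem holderConjugate_sqrt_two : (√2).HolderConjugate (2 + √2) := by
  have h : conjExponent √2 = 2 + √2 := by
    have : √2 - 1 ≠ 0 := by nlinarith [one_lt_sqrt_two]
    rw [conjExponent, div_eq_iff this]
    nlinarith [mul_self_sqrt zero_le_two]
  exact h ▸ .conjExponent one_lt_sqrt_two

theorem noPred_iff_mem_natBeattySet {m : ℕ} (hm : 0 < m) :
    NoPred m ↔ m ∈ natBeattySet (2 + √2) := by
  rw [NoPred, exists_pos_f_eq_iff,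
    irrational_sqrt_two.mem_natBeattySet_iff_notMem holderConjugate_sqrt_two hm]

theorem ncard_noPred_lt (N : ℕ) :
    {m : ℕ | 0 < m ∧ m < N ∧ NoPred m}.ncard = ⌊(N : ℝ) / (2 + √2)⌋₊ := by
  have hs : 1 ≤ 2 + √2 := by linarith [sqrt_nonneg 2]
  have hset : {m : ℕ | 0 < m ∧ m < N ∧ NoPred m} = natBeattySet (2 + √2) ∩ Set.Iio N := by
    ext m
    constructor
    · rintro ⟨hm, hmN, hnp⟩
      exact ⟨(noPred_iff_mem_natBeattySet hm).1 hnp, hmN⟩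
    · rintro ⟨hmem, hmN⟩
      have hm := pos_of_mem_natBeattySet hs hmem
      exact ⟨hm, hmN, (noPred_iff_mem_natBeattySet hm).2 hmem⟩
  rw [hset, ncard_natBeattySet_inter_Iio hs (by simpa using irrational_sqrt_two.natCast_add 2)]

theorem natFloor_div_two_add_sqrt_two_eq {N c : ℕ} (hlo : (c : ℝ) * 3.41421357 ≤ N)
    (hhi : (N : ℝ) < (c + 1) * 3.41421356) : ⌊(N : ℝ) / (2 + √2)⌋₊ = c := by
  have hsq : √2 * √2 = 2 := mul_self_sqrt zero_le_two
  have hlb : (1.41421356 : ℝ) < √2 := by nlinarith [sqrt_nonneg 2]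
  have hub : √2 < 1.41421357 := by nlinarith [sqrt_nonneg 2]
  have hs : 0 < 2 + √2 := by positivity
  rw [Nat.floor_eq_iff (by positivity), le_div_iff₀ hs, div_lt_iff₀ hs]
  constructor <;> nlinarith

/-- The number of positive integers `m < N` with no predecessor under `f` is
`⌊N/(2+√2)⌋`; in particular below `10^ℓ` for `ℓ = 1,…,6` there are
`2, 29, 292, 2928, 29289, 292893` such numbers. -/
theorem card_noPred_lt :
    (∀ N : ℕ, 0 < N →
      {m : ℕ | 0 < m ∧ m < N ∧ NoPred m}.ncard = ⌊(N : ℝ) / (2 + Real.sqrt 2)⌋₊) ∧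
    {m : ℕ | 0 < m ∧ m < 10 ^ 1 ∧ NoPred m}.ncard = 2 ∧
    {m : ℕ | 0 < m ∧ m < 10 ^ 2 ∧ NoPred m}.ncard = 29 ∧
    {m : ℕ | 0 < m ∧ m < 10 ^ 3 ∧ NoPred m}.ncard = 292 ∧
    {m : ℕ | 0 < m ∧ m < 10 ^ 4 ∧ NoPred m}.ncard = 2928 ∧
    {m : ℕ | 0 < m ∧ m < 10 ^ 5 ∧ NoPred m}.ncard = 29289 ∧
    {m : ℕ | 0 < m ∧ m < 10 ^ 6 ∧ NoPred m}.ncard = 292893 := by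
  refine ⟨fun N _ ↦ ncard_noPred_lt N, ?_, ?_, ?_, ?_, ?_, ?_⟩ <;>
    rw [ncard_noPred_lt, natFloor_div_two_add_sqrt_two_eq] <;> norm_num
end

section
/- If n is an odd positive integer and f(n) is even, then f(f(n)) = n − 1; in particular f(f(n)) is even. -/
/-- Irrationality makes `m = ⌊nα⌋` satisfy `nα - 1 < m < nα` strictly (for `n ≠ 0`),
so `n - 1 ≤ n - 1/α < m/α < n`. -/
theorem Nat.floor_div_floor_mul_of_irrational {α : ℝ} (hα : Irrational α) (h1 : 1 ≤ α) (n : ℕ) :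
    ⌊(⌊n * α⌋₊ : ℝ) / α⌋₊ = n - 1 := by
  rcases n.eq_zero_or_pos with rfl | hn
  · simp
  have hα₀ : 0 < α := by linarith
  set m := ⌊n * α⌋₊
  have hlt : (m : ℝ) < n * α :=
    (Nat.floor_le (by positivity)).lt_of_ne ((hα.natCast_mul hn.ne').ne_nat m).symm
  have hgt : n * α < m + 1 := Nat.lt_floor_add_one _
  rw [Nat.floor_eq_iff (by positivity), Nat.cast_sub hn, Nat.cast_one, sub_add_cancel,
    le_div_iff₀ hα₀, div_lt_iff₀ hα₀]
  constructor <;> linarith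

theorem f_of_even {n : ℕ} (h : Even n) : f n = ⌊(n : ℝ) / Real.sqrt 2⌋₊ := if_pos h

theorem f_of_odd {n : ℕ} (h : Odd n) : f n = ⌊(n : ℝ) * Real.sqrt 2⌋₊ :=
  if_neg (Nat.not_even_iff_odd.mpr h)

theorem f_f_odd_even_general (n : ℕ) (hno : Odd n) (hfe : Even (f n)) :
    f (f n) = n - 1 ∧ Even (f (f n)) := by
  have h : f (f n) = n - 1 := by
    rw [f_of_even hfe, f_of_odd hno]
    exact Nat.floor_div_floor_mul_of_irrational irrational_sqrt_two Real.one_lt_sqrt_two.le n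
  exact ⟨h, h ▸ Nat.Odd.sub_odd hno odd_one⟩

/-- If `n` is an odd positive integer and `f(n)` is even, then `f(f(n)) = n - 1`;
in particular `f(f(n))` is even. -/
theorem f_f_odd_even (n : ℕ) (hn : 0 < n) (hno : Odd n) (hfe : Even (f n)) :
    f (f n) = n - 1 ∧ Even (f (f n)) :=
  f_f_odd_even_general n hno hfe
end
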